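/- arXiv:math/0311179 — 2 statements merged into one kernel-verified Lean document; each statement's English description precedes it below -/
import Mathlib

section
/- Let (V, Ω) be a finite-dimensional symplectic vector space, τ a linear involution with eigenspaces V₁ (for +1) and V₋₁ (for -1), such that V₁ is Lagrangian. Suppose Y: V → V is an invertible linear map with Y ∘ τ = -τ ∘ Y and such that Ω(Yv, w) + Ω(v, Yw) = 0 for all v, w (i.e. Y is in the symplectic Lie algebra). Then V₋₁ is also a Lagrangian subspace, and consequently τ is anti-symplectic. -/
/-- If V₁ is Lagrangian and there is an invertible infinitesimally
symplectic map Y anticommuting with the involution τ, then V₋₁ is Lagrangian as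
well, and consequently τ is anti-symplectic. -/
theorem stmt_3 {V : Type*} [AddCommGroup V] [Module ℝ V] [FiniteDimensional ℝ V]
    (Ω : V →ₗ[ℝ] V →ₗ[ℝ] ℝ)
    (halt : ∀ v, Ω v v = 0)
    (hnd : ∀ v, (∀ w, Ω v w = 0) → v = 0)
    (τ : V →ₗ[ℝ] V) (hτ : τ ∘ₗ τ = LinearMap.id)
    (V1 Vneg1 : Submodule ℝ V)
    (hV1 : ∀ v, v ∈ V1 ↔ τ v = v)
    (hVneg1 : ∀ v, v ∈ Vneg1 ↔ τ v = -v)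
    (hLag1 : (∀ v ∈ V1, ∀ w ∈ V1, Ω v w = 0) ∧
      2 * Module.finrank ℝ V1 = Module.finrank ℝ V)
    (Y : V →ₗ[ℝ] V) (hYbij : Function.Bijective Y)
    (hYτ : Y ∘ₗ τ = -(τ ∘ₗ Y))
    (hYsymp : ∀ v w, Ω (Y v) w + Ω v (Y w) = 0) :
    ((∀ v ∈ Vneg1, ∀ w ∈ Vneg1, Ω v w = 0) ∧
      2 * Module.finrank ℝ Vneg1 = Module.finrank ℝ V) ∧
    (∀ v w, Ω (τ v) (τ w) = - Ω v w) := by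
  have hττ : ∀ v, τ (τ v) = v := fun v => by
    have := LinearMap.ext_iff.mp hτ v; simpa using this
  have hYτ' : ∀ v, Y (τ v) = - τ (Y v) := fun v => by
    have := LinearMap.ext_iff.mp hYτ v; simpa using this
  have hτY : ∀ v, τ (Y v) = - Y (τ v) := fun v => by
    rw [hYτ' v, neg_neg]
  -- Isotropy of Vneg1
  have hiso : ∀ v ∈ Vneg1, ∀ w ∈ Vneg1, Ω v w = 0 := by
    intro v hv w hw
    obtain ⟨a, rfl⟩ := hYbij.2 v
    obtain ⟨b, rfl⟩ := hYbij.2 w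
    have ha : τ a = a := by
      apply hYbij.1
      rw [hYτ' a, (hVneg1 _).mp hv, neg_neg]
    have hb : τ b = b := by
      apply hYbij.1
      rw [hYτ' b, (hVneg1 _).mp hw, neg_neg]
    have h2 : τ (Y (Y b)) = Y (Y b) := by
      rw [hτY, hτY, hb, map_neg, neg_neg]
    have h0 : Ω a (Y (Y b)) = 0 :=
      hLag1.1 a ((hV1 a).mpr ha) (Y (Y b)) ((hV1 _).mpr h2)
    have := hYsymp a (Y b)
    rw [h0] at this
    linarith
  -- Dimensions: Y gives injections V1 → Vneg1 and Vneg1 → V1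
  have hmap1 : ∀ x : V1, Y (x : V) ∈ Vneg1 := by
    intro ⟨x, hx⟩
    rw [hVneg1, hτY, (hV1 x).mp hx]
  have hmap2 : ∀ x : Vneg1, Y (x : V) ∈ V1 := by
    intro ⟨x, hx⟩
    rw [hV1, hτY, (hVneg1 x).mp hx, map_neg, neg_neg]
  have hinj : ∀ (W W' : Submodule ℝ V), (∀ x : W, Y (x : V) ∈ W') →
      Module.finrank ℝ W ≤ Module.finrank ℝ W' := by
    intro W W' h
    have : Function.Injective ((Y.domRestrict W).codRestrict W' h) := by
      intro x y hxy
      have : Y (x : V) = Y (y : V) := congrArg Subtype.val hxy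
      exact Subtype.ext (hYbij.1 this)
    exact LinearMap.finrank_le_finrank_of_injective this
  have hdim : Module.finrank ℝ Vneg1 = Module.finrank ℝ V1 :=
    le_antisymm (hinj Vneg1 V1 hmap2) (hinj V1 Vneg1 hmap1)
  refine ⟨⟨hiso, by rw [hdim]; exact hLag1.2⟩, ?_⟩
  -- anti-symplectic
  intro v w
  have key : ∀ u : V, u = (2⁻¹ : ℝ) • (u + τ u) + (2⁻¹ : ℝ) • (u - τ u) := by
    intro u
    module
  set a := (2⁻¹ : ℝ) • (v + τ v) with hadef
  set b := (2⁻¹ : ℝ) • (v - τ v) with hbdef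
  set c := (2⁻¹ : ℝ) • (w + τ w) with hcdef
  set d := (2⁻¹ : ℝ) • (w - τ w) with hddef
  have ha : a ∈ V1 := by rw [hV1, hadef, map_smul, map_add, hττ]; rw [add_comm]
  have hb : b ∈ Vneg1 := by
    rw [hVneg1, hbdef, map_smul, map_sub, hττ, ← smul_neg, neg_sub]
  have hc : c ∈ V1 := by rw [hV1, hcdef, map_smul, map_add, hττ]; rw [add_comm]
  have hd : d ∈ Vneg1 := by
    rw [hVneg1, hddef, map_smul, map_sub, hττ, ← smul_neg, neg_sub]
  have hτa : τ a = a := (hV1 a).mp ha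
  have hτb : τ b = -b := (hVneg1 b).mp hb
  have hτc : τ c = c := (hV1 c).mp hc
  have hτd : τ d = -d := (hVneg1 d).mp hd
  have hv : v = a + b := key v
  have hw : w = c + d := key w
  have hac : Ω a c = 0 := hLag1.1 a ha c hc
  have hbd : Ω b d = 0 := hiso b hb d hd
  rw [hv, hw]
  simp only [map_add, map_neg, LinearMap.add_apply, LinearMap.neg_apply,
    hτa, hτb, hτc, hτd, map_sub, LinearMap.sub_apply]
  -- goal should now be an algebraic identity
  linarith [hac, hbd]
end

section
/- Let (V, Ω) be a finite-dimensional symplectic vector space with a symplectic linear action of a torus T (a compact connected abelian Lie group) such that the fixed subspace V_fix = { v : t.v = v for all t ∈ T } is trivial, and let τ be a linear involution on V with t ∘ τ = τ ∘ t⁻¹ for all t ∈ T. If the +1 eigenspace V₁ of τ is Lagrangian, then τ is anti-symplectic. -/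
/-!
Write `V₁`, `V₋₁` for the eigenspaces of `τ`. Since
`2 (Ω(τv, τw) + Ω(v, w)) = Ω(v + τv, w + τw) + Ω(v - τv, w - τw)` and `V₁` is isotropic, it
suffices that `V₋₁` is isotropic. For `v, w ∈ V₋₁` the vectors `t v - t⁻¹ v`, `t w - t⁻¹ w` lie
in `V₁`, and expanding `Ω` of them gives `2 Ω(v, w) = Ω(t² v, w) + Ω(v, t² w)`. Averaging over the
Haar measure of `T` kills the right-hand side: `∫ t² v dt` is fixed by every square, and in a
connected group a vector `x` fixed by every square is fixed by everything, because its stabiliser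
contains the neighbourhood `{s | ρ s + 1 invertible}` of `1`, on which
`(ρ s + 1) (ρ s x - x) = ρ (s²) x - x = 0`.
-/

open Filter Topology Set MeasureTheory

theorem apply_eq_of_forall_apply_mul_self_eq {V : Type*} [NormedAddCommGroup V]
    [NormedSpace ℝ V] [FiniteDimensional ℝ V] {T : Type*} [TopologicalSpace T] [Group T]
    [IsTopologicalGroup T] [ConnectedSpace T] (ρ : T →* (V ≃ₗ[ℝ] V))
    (hcont : ∀ v, Continuous fun t => ρ t v) {x : V} (hx : ∀ s, ρ (s * s) x = x) (t : T) :
    ρ t x = x := by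
  let L : T → V →L[ℝ] V := fun s => LinearMap.toContinuousLinearMap (ρ s : V →ₗ[ℝ] V)
  have hL : Continuous L := continuous_clm_apply.2 hcont
  let H : Subgroup T := (MulAction.stabilizer (V ≃ₗ[ℝ] V) x).comap ρ
  have hmem : ∀ s, IsUnit (L s + 1) → s ∈ H := by
    rintro s ⟨u, hu⟩
    have h : (L s + 1) (ρ s x - x) = 0 := by
      simp [L, ← LinearEquiv.mul_apply, ← map_mul, hx]
    have h' := congrArg (⇑(↑u⁻¹ : V →L[ℝ] V)) h
    rw [← hu, ← ContinuousLinearMap.comp_apply, ← ContinuousLinearMap.mul_def, u.inv_mul,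
      map_zero] at h'
    exact sub_eq_zero.1 h'
  have hnhds : (H : Set T) ∈ 𝓝 1 := by
    refine mem_of_superset ?_ hmem
    refine (Units.isOpen.preimage (hL.add continuous_const)).mem_nhds ?_
    have : L 1 + 1 = 2 := by ext; simp [L, two_smul]
    show IsUnit (L 1 + 1)
    rw [this]
    simpa only [map_ofNat] using (isUnit_of_invertible (2 : ℝ)).map (algebraMap ℝ (V →L[ℝ] V))
  have hopen := H.isOpen_of_mem_nhds hnhds
  have hH : (H : Set T) = univ :=
    IsClopen.eq_univ ⟨H.isClosed_of_isOpen hopen, hopen⟩ ⟨1, H.one_mem⟩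
  exact (hH.symm ▸ mem_univ t : t ∈ (H : Set T))

theorem integral_apply_mul_self_eq_zero {V : Type*} [NormedAddCommGroup V]
    [NormedSpace ℝ V] [FiniteDimensional ℝ V] {T : Type*} [TopologicalSpace T] [CommGroup T]
    [IsTopologicalGroup T] [ConnectedSpace T] [MeasurableSpace T] [BorelSpace T]
    (μ : Measure T) [μ.IsMulLeftInvariant] (ρ : T →* (V ≃ₗ[ℝ] V))
    (hcont : ∀ v, Continuous fun t => ρ t v) (hfix : ∀ v : V, (∀ t, ρ t v = v) → v = 0)
    (v : V) : ∫ t, ρ (t * t) v ∂μ = 0 := by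
  refine hfix _ (apply_eq_of_forall_apply_mul_self_eq ρ hcont fun s => ?_)
  calc ρ (s * s) (∫ t, ρ (t * t) v ∂μ)
      = ∫ t, ρ (s * s) (ρ (t * t) v) ∂μ :=
        ((ρ (s * s)).toContinuousLinearEquiv.integral_comp_comm _).symm
    _ = ∫ t, ρ ((s * t) * (s * t)) v ∂μ := by
        simp [← LinearEquiv.mul_apply, ← map_mul, mul_mul_mul_comm]
    _ = ∫ t, ρ (t * t) v ∂μ := integral_mul_left_eq_self (fun t => ρ (t * t) v) s

theorem bilin_apply_mul_self_add_eq_two_mul {R V T : Type*} [CommRing R]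
    [AddCommGroup V] [Module R V] [Group T] (Ω : V →ₗ[R] V →ₗ[R] R)
    (ρ : T →* (V ≃ₗ[R] V)) (hsymp : ∀ t v w, Ω (ρ t v) (ρ t w) = Ω v w)
    (τ : V →ₗ[R] V) (hcompat : ∀ t v, ρ t (τ v) = τ (ρ t⁻¹ v))
    (hpos : ∀ v w, τ v = v → τ w = w → Ω v w = 0)
    {v w : V} (hv : τ v = -v) (hw : τ w = -w) (t : T) :
    Ω (ρ (t * t) v) w + Ω v (ρ (t * t) w) = 2 * Ω v w := by
  have hfix : ∀ u, τ u = -u → τ (ρ t u - ρ t⁻¹ u) = ρ t u - ρ t⁻¹ u := by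
    intro u hu
    have h₁ := hcompat t u
    have h₂ := hcompat t⁻¹ u
    rw [hu, map_neg] at h₁ h₂
    rw [inv_inv] at h₂
    rw [map_sub, ← h₁, ← h₂]
    abel
  have h := hpos _ _ (hfix v hv) (hfix w hw)
  have e₁ : Ω (ρ t v) (ρ t⁻¹ w) = Ω (ρ (t * t) v) w := by
    rw [← hsymp t]; simp [← LinearEquiv.mul_apply, ← map_mul]
  have e₂ : Ω (ρ t⁻¹ v) (ρ t w) = Ω v (ρ (t * t) w) := by
    rw [← hsymp t]; simp [← LinearEquiv.mul_apply, ← map_mul]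
  simp only [map_sub, LinearMap.sub_apply, hsymp, e₁, e₂] at h
  linear_combination -h

theorem form_map_map_eq_neg_of_isotropic {K V : Type*} [Field K] [NeZero (2 : K)]
    [AddCommGroup V] [Module K V] (Ω : V →ₗ[K] V →ₗ[K] K) (τ : V →ₗ[K] V)
    (hτ : τ ∘ₗ τ = LinearMap.id)
    (hpos : ∀ v w, τ v = v → τ w = w → Ω v w = 0)
    (hneg : ∀ v w, τ v = -v → τ w = -w → Ω v w = 0) (v w : V) :
    Ω (τ v) (τ w) = -Ω v w := by
  have hττ (u : V) : τ (τ u) = u := LinearMap.congr_fun hτ u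
  have h₁ := hpos (v + τ v) (w + τ w) (by simp [hττ, add_comm]) (by simp [hττ, add_comm])
  have h₂ := hneg (v - τ v) (w - τ w) (by simp [hττ]) (by simp [hττ])
  simp only [map_add, map_sub, LinearMap.add_apply, LinearMap.sub_apply] at h₁ h₂
  have h : 2 * (Ω (τ v) (τ w) + Ω v w) = 0 := by linear_combination h₁ + h₂
  exact eq_neg_of_add_eq_zero_left ((mul_eq_zero.1 h).resolve_left two_ne_zero)

theorem form_eq_zero_of_map_eq_neg {V : Type*} [NormedAddCommGroup V]
    [NormedSpace ℝ V] [FiniteDimensional ℝ V] {T : Type*} [TopologicalSpace T] [CommGroup T]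
    [IsTopologicalGroup T] [CompactSpace T] [ConnectedSpace T] [MeasurableSpace T]
    [BorelSpace T] (μ : Measure T) [IsProbabilityMeasure μ] [μ.IsMulLeftInvariant]
    (Ω : V →ₗ[ℝ] V →ₗ[ℝ] ℝ) (ρ : T →* (V ≃ₗ[ℝ] V)) (hcont : ∀ v, Continuous fun t => ρ t v)
    (hsymp : ∀ t v w, Ω (ρ t v) (ρ t w) = Ω v w) (hfix : ∀ v : V, (∀ t, ρ t v = v) → v = 0)
    (τ : V →ₗ[ℝ] V) (hcompat : ∀ t v, ρ t (τ v) = τ (ρ t⁻¹ v))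
    (hpos : ∀ v w, τ v = v → τ w = w → Ω v w = 0)
    {v w : V} (hv : τ v = -v) (hw : τ w = -w) : Ω v w = 0 := by
  have hint (u : V) : Integrable (fun t => ρ (t * t) u) μ :=
    ((hcont u).comp (continuous_id.mul continuous_id)).integrable_of_hasCompactSupport
      (.of_compactSpace _)
  have hmean (L : V →ₗ[ℝ] ℝ) (u : V) : ∫ t, L (ρ (t * t) u) ∂μ = 0 := by
    have h := (LinearMap.toContinuousLinearMap L).integral_comp_comm (hint u)
    rwa [integral_apply_mul_self_eq_zero μ ρ hcont hfix, map_zero] at h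
  have hint_comp (L : V →ₗ[ℝ] ℝ) (u : V) : Integrable (fun t => L (ρ (t * t) u)) μ :=
    (LinearMap.toContinuousLinearMap L).integrable_comp (hint u)
  have h : 2 * Ω v w = 0 := calc
    2 * Ω v w = ∫ t, (Ω.flip w (ρ (t * t) v) + Ω v (ρ (t * t) w)) ∂μ := by
      simp only [LinearMap.flip_apply,
        bilin_apply_mul_self_add_eq_two_mul Ω ρ hsymp τ hcompat hpos hv hw]
      simp
    _ = 0 := by
      rw [integral_add (hint_comp _ v) (hint_comp _ w), hmean, hmean, add_zero]
  exact (mul_eq_zero.1 h).resolve_left two_ne_zero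

theorem stmt_15_general {V : Type*} [NormedAddCommGroup V] [NormedSpace ℝ V]
    [FiniteDimensional ℝ V]
    (Ω : V →ₗ[ℝ] V →ₗ[ℝ] ℝ)
    {T : Type*} [TopologicalSpace T] [CommGroup T] [IsTopologicalGroup T]
    [CompactSpace T] [ConnectedSpace T]
    (ρ : T →* (V ≃ₗ[ℝ] V))
    (hcont : Continuous fun p : T × V => ρ p.1 p.2)
    (hsymp : ∀ t v w, Ω (ρ t v) (ρ t w) = Ω v w)
    (hfix : ∀ v : V, (∀ t, ρ t v = v) → v = 0)
    (τ : V →ₗ[ℝ] V) (hτ : τ ∘ₗ τ = LinearMap.id)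
    (hcompat : ∀ t v, ρ t (τ v) = τ (ρ t⁻¹ v))
    (V1 : Submodule ℝ V) (hV1 : ∀ v, v ∈ V1 ↔ τ v = v)
    (hLag : (∀ v ∈ V1, ∀ w ∈ V1, Ω v w = 0) ∧
      2 * Module.finrank ℝ V1 = Module.finrank ℝ V) :
    ∀ v w, Ω (τ v) (τ w) = - Ω v w := by
  borelize T
  have : IsProbabilityMeasure (Measure.haarMeasure (⊤ : TopologicalSpace.PositiveCompacts T)) :=
    ⟨by simpa using Measure.haarMeasure_self (K₀ := (⊤ : TopologicalSpace.PositiveCompacts T))⟩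
  have hpos (v w : V) (hv : τ v = v) (hw : τ w = w) : Ω v w = 0 :=
    hLag.1 v ((hV1 v).2 hv) w ((hV1 w).2 hw)
  exact form_map_map_eq_neg_of_isotropic Ω τ hτ hpos fun v w hv hw =>
    form_eq_zero_of_map_eq_neg (Measure.haarMeasure ⊤) Ω ρ
      (fun v => hcont.comp (.prodMk continuous_id continuous_const)) hsymp hfix τ hcompat hpos hv hw

/-- Let (V, Ω) be a finite-dimensional symplectic vector space with
a continuous symplectic linear action of a torus T (compact connected abelian
group) without nonzero fixed vectors, and τ a linear involution with
t ∘ τ = τ ∘ t⁻¹.  If the +1 eigenspace of τ is Lagrangian, then τ is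
anti-symplectic. -/
theorem stmt_15 {V : Type*} [NormedAddCommGroup V] [NormedSpace ℝ V]
    [FiniteDimensional ℝ V]
    (Ω : V →ₗ[ℝ] V →ₗ[ℝ] ℝ)
    (halt : ∀ v, Ω v v = 0)
    (hnd : ∀ v, (∀ w, Ω v w = 0) → v = 0)
    {T : Type*} [TopologicalSpace T] [CommGroup T] [IsTopologicalGroup T]
    [CompactSpace T] [ConnectedSpace T]
    (ρ : T →* (V ≃ₗ[ℝ] V))
    (hcont : Continuous fun p : T × V => ρ p.1 p.2)
    (hsymp : ∀ t v w, Ω (ρ t v) (ρ t w) = Ω v w)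
    (hfix : ∀ v : V, (∀ t, ρ t v = v) → v = 0)
    (τ : V →ₗ[ℝ] V) (hτ : τ ∘ₗ τ = LinearMap.id)
    (hcompat : ∀ t v, ρ t (τ v) = τ (ρ t⁻¹ v))
    (V1 : Submodule ℝ V) (hV1 : ∀ v, v ∈ V1 ↔ τ v = v)
    (hLag : (∀ v ∈ V1, ∀ w ∈ V1, Ω v w = 0) ∧
      2 * Module.finrank ℝ V1 = Module.finrank ℝ V) :
    ∀ v w, Ω (τ v) (τ w) = - Ω v w :=
  stmt_15_general Ω ρ hcont hsymp hfix τ hτ hcompat V1 hV1 hLag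
end
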